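/- Let ξ ∈ ℝ³ be nonzero, let w₁, …, w_{m+1} ∈ ξ^⊥ with any two linearly independent, and fix 0 ≤ l ≤ m with l ≥ 2. Suppose w_{k₁}, …, w_{k_{l+1}} give l+1 linearly independent tensors among { w_k^{⊙l} ⊙ ξ^{⊙(m-l)} }. Then w_{k₁}^{⊙l} ⊙ ξ^{⊙(m-l)} cannot be written as a linear combination of the tensors w_i^{⊙p} ⊙ ξ^{⊙(m-p)} with p ≠ l (all i) together with the remaining tensors w_{k_j}^{⊙l} ⊙ ξ^{⊙(m-l)}, j = 2, …, l+1. -/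

import Mathlib

def dot3 (u v : Fin 3 → ℝ) : ℝ := ∑ i, u i * v i

/-- The symmetric tensor w^{⊙p} ⊙ ξ^{⊙(m-p)} in Sym^m(ℝ³), modeled faithfully as
the polynomial function y ↦ ⟨w,y⟩^p ⟨ξ,y⟩^{m-p}. -/
noncomputable def symMix (m p : ℕ) (w ξ : Fin 3 → ℝ) : (Fin 3 → ℝ) → ℝ :=
  fun y => (dot3 w y) ^ p * (dot3 ξ y) ^ (m - p)

/-!
On a line `y + ℝ ξ` every generator `u^{⊙p} ⊙ ξ^{⊙(m-p)}` with `u ⊥ ξ` restricts to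
`⟨u, y⟩^p t^{m-p}`, where `t = ⟨ξ, ·⟩` runs over all of `ℝ`. The degree `p` is thus recorded by the
power of `t`, and comparing coefficients of `t^{m-l}` shows that any expression of
`w_{k₁}^{⊙l} ⊙ ξ^{⊙(m-l)}` through the generators survives when the terms with `p ≠ l` are
dropped. It would then lie in the span of the other degree-`l` tensors, contradicting their
linear independence.
-/

open Polynomial in
theorem Finset.sum_filter_eq_of_forall_sum_mul_pow_eq {R ι : Type*} [CommRing R] [IsDomain R]
    [Infinite R] (s : Finset ι) (c : ι → R) (e : ι → ℕ) (b : R) (d : ℕ)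
    (h : ∀ t, ∑ i ∈ s, c i * t ^ e i = b * t ^ d) :
    ∑ i ∈ s with d = e i, c i = b := by
  have hP : ∑ i ∈ s, C (c i) * X ^ e i = C b * X ^ d :=
    Polynomial.funext fun t => by simpa [eval_finsetSum] using h t
  simpa [finsetSum_coeff, coeff_C_mul_X_pow, Finset.sum_filter] using
    congrArg (coeff · d) hP

lemma dot3_eq_dotProduct (u v : Fin 3 → ℝ) : dot3 u v = u ⬝ᵥ v := rfl

lemma exists_symMix_eq {ξ : Fin 3 → ℝ} (hξ : ξ ≠ 0) (y : Fin 3 → ℝ) (t : ℝ) :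
    ∃ z, ∀ m p u, dot3 u ξ = 0 → symMix m p u ξ z = dot3 u y ^ p * t ^ (m - p) := by
  have hQ : ξ ⬝ᵥ ξ ≠ 0 := mt dotProduct_self_eq_zero.mp hξ
  refine ⟨y + ((t - ξ ⬝ᵥ y) / (ξ ⬝ᵥ ξ)) • ξ, fun m p u hu => ?_⟩
  rw [dot3_eq_dotProduct] at hu
  simp only [symMix, dot3_eq_dotProduct, dotProduct_add, dotProduct_smul, smul_eq_mul, hu,
    div_mul_cancel₀ _ hQ]
  ring

section

variable {m l : ℕ} {ξ w : Fin 3 → ℝ}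

lemma symMix_eq_sum_filter {ι : Type*} (hξ : ξ ≠ 0) (hl : l ≤ m) (hw : dot3 w ξ = 0)
    (s : Finset ι) (c : ι → ℝ) (p : ι → ℕ) (u : ι → Fin 3 → ℝ) (hp : ∀ i ∈ s, p i ≤ m)
    (hu : ∀ i ∈ s, dot3 (u i) ξ = 0)
    (h : symMix m l w ξ = ∑ i ∈ s, c i • symMix m (p i) (u i) ξ) :
    symMix m l w ξ = ∑ i ∈ s with p i = l, c i • symMix m l (u i) ξ := by
  funext y
  have hcoeff : ∑ i ∈ s with m - l = m - p i, c i * dot3 (u i) y ^ p i = dot3 w y ^ l := by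
    refine Finset.sum_filter_eq_of_forall_sum_mul_pow_eq s _ (fun i => m - p i) _ _ fun t => ?_
    obtain ⟨z, hz⟩ := exists_symMix_eq hξ y t
    have := congrFun h z
    simp only [Finset.sum_apply, Pi.smul_apply, smul_eq_mul] at this
    rw [hz _ _ _ hw, Finset.sum_congr rfl fun i hi => by rw [hz _ _ _ (hu i hi)]] at this
    rw [this]
    exact Finset.sum_congr rfl fun i _ => by ring
  have hfilter : s.filter (fun i => m - l = m - p i) = s.filter (fun i => p i = l) :=
    Finset.filter_congr fun i hi => by have := hp i hi; omega
  rw [hfilter] at hcoeff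
  simp only [symMix, Finset.sum_apply, Pi.smul_apply, smul_eq_mul, ← hcoeff, Finset.sum_mul]
  refine Finset.sum_congr rfl fun i hi => ?_
  rw [(Finset.mem_filter.mp hi).2]
  ring

lemma symMix_mem_span_of_mem_span {s : Set (ℕ × (Fin 3 → ℝ))} (hξ : ξ ≠ 0) (hl : l ≤ m)
    (hw : dot3 w ξ = 0) (hs : ∀ q ∈ s, q.1 ≤ m ∧ dot3 q.2 ξ = 0)
    (h : symMix m l w ξ ∈ Submodule.span ℝ ((fun q => symMix m q.1 q.2 ξ) '' s)) :
    symMix m l w ξ ∈ Submodule.span ℝ ((fun u => symMix m l u ξ) '' {u | (l, u) ∈ s}) := by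
  obtain ⟨f, hf, hsum⟩ := (Finsupp.mem_span_image_iff_linearCombination ℝ).mp h
  rw [Finsupp.linearCombination_apply, Finsupp.sum] at hsum
  have hsupp : ∀ q ∈ f.support, q ∈ s := fun q hq => hf hq
  rw [symMix_eq_sum_filter hξ hl hw f.support f Prod.fst Prod.snd
    (fun q hq => (hs q (hsupp q hq)).1) (fun q hq => (hs q (hsupp q hq)).2) hsum.symm]
  refine Submodule.sum_mem _ fun q hq => Submodule.smul_mem _ _ (Submodule.subset_span ?_)
  obtain ⟨hqs, rfl⟩ := Finset.mem_filter.mp hq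
  exact ⟨q.2, hsupp q hqs, rfl⟩

end

theorem symMix_not_in_span_general (m l : ℕ) (hlm : l ≤ m)
    (ξ : Fin 3 → ℝ) (hξ : ξ ≠ 0)
    (w : Fin (m + 1) → Fin 3 → ℝ)
    (hperp : ∀ k, dot3 (w k) ξ = 0)
    (k : Fin (l + 1) → Fin (m + 1))
    (hind : LinearIndependent ℝ (fun j : Fin (l + 1) => symMix m l (w (k j)) ξ)) :
    symMix m l (w (k 0)) ξ ∉
      Submodule.span ℝ
        ({f : (Fin 3 → ℝ) → ℝ | ∃ p ≤ m, p ≠ l ∧ ∃ i, f = symMix m p (w i) ξ} ∪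
         {f : (Fin 3 → ℝ) → ℝ | ∃ j : Fin (l + 1), j ≠ 0 ∧ f = symMix m l (w (k j)) ξ}) := by
  intro h
  let s : Set (ℕ × (Fin 3 → ℝ)) :=
    {q | q.1 ≤ m ∧ q.1 ≠ l ∧ ∃ i, q.2 = w i} ∪ {q | q.1 = l ∧ ∃ j ≠ 0, q.2 = w (k j)}
  have hs : ∀ q ∈ s, q.1 ≤ m ∧ dot3 q.2 ξ = 0 := by
    rintro ⟨p, u⟩ (⟨hp, -, i, rfl⟩ | ⟨hpl, j, -, rfl⟩)
    exacts [⟨hp, hperp i⟩, ⟨hpl ▸ hlm, hperp (k j)⟩]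
  refine hind.notMem_span_image (s := {j | j ≠ 0}) (by simp) <| Submodule.span_mono ?pure <|
    symMix_mem_span_of_mem_span hξ hlm (hperp (k 0)) hs (Submodule.span_mono ?generators h)
  case generators =>
    rintro f (⟨p, hp, hpl, i, rfl⟩ | ⟨j, hj, rfl⟩)
    exacts [⟨(p, w i), Or.inl ⟨hp, hpl, i, rfl⟩, rfl⟩, ⟨(l, w (k j)), Or.inr ⟨rfl, j, hj, rfl⟩, rfl⟩]
  case pure =>
    rintro f ⟨u, hu | ⟨-, j, hj, rfl⟩, rfl⟩
    exacts [absurd rfl hu.2.1, ⟨j, hj, rfl⟩]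

/-- If w_{k₁}^{⊙l} ⊙ ξ^{⊙(m-l)}, …, w_{k_{l+1}}^{⊙l} ⊙ ξ^{⊙(m-l)} are linearly
independent, then the first of them is not a linear combination of the tensors
w_i^{⊙p} ⊙ ξ^{⊙(m-p)} with p ≠ l together with the remaining l of them. -/
theorem symMix_not_in_span (m l : ℕ) (hl2 : 2 ≤ l) (hlm : l ≤ m)
    (ξ : Fin 3 → ℝ) (hξ : ξ ≠ 0)
    (w : Fin (m + 1) → Fin 3 → ℝ)
    (hperp : ∀ k, dot3 (w k) ξ = 0)
    (hpair : ∀ i j, i ≠ j → LinearIndependent ℝ ![w i, w j])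
    (k : Fin (l + 1) → Fin (m + 1)) (hk : Function.Injective k)
    (hind : LinearIndependent ℝ (fun j : Fin (l + 1) => symMix m l (w (k j)) ξ)) :
    symMix m l (w (k 0)) ξ ∉
      Submodule.span ℝ
        ({f : (Fin 3 → ℝ) → ℝ | ∃ p ≤ m, p ≠ l ∧ ∃ i, f = symMix m p (w i) ξ} ∪
         {f : (Fin 3 → ℝ) → ℝ | ∃ j : Fin (l + 1), j ≠ 0 ∧ f = symMix m l (w (k j)) ξ}) :=
  symMix_not_in_span_general m l hlm ξ hξ w hperp k hind
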